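/- Let (X,κ) and (Y,λ) be digital images having the same homotopy type. Then (2^X,κ') and (2^Y,λ') have the same homotopy type, and K(X,κ') and K(Y,λ') have the same homotopy type. -/

import Mathlib

/-- `a` and `b` are adjacent or equal ("⟷≤") with respect to adjacency relation `α`. -/
def AdjEq {A : Type*} (α : A → A → Prop) (a b : A) : Prop := α a b ∨ a = b

/-- `f : (X,κ) → (Y,lam)` is digitally continuous: adjacency is sent to
adjacency-or-equality. -/
def DigCont {X Y : Type*} (κ : X → X → Prop) (lam : Y → Y → Prop) (f : X → Y) : Prop :=
  ∀ x x', κ x x' → AdjEq lam (f x) (f x')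

/-- Continuity of `f` relative to carrier sets: `f` maps `S` into `T` and sends
`α`-adjacent elements of `S` to `β`-adjacent-or-equal elements. -/
def ContOn {A B : Type*} (α : A → A → Prop) (β : B → B → Prop)
    (S : Set A) (T : Set B) (f : A → B) : Prop :=
  (∀ a ∈ S, f a ∈ T) ∧ ∀ a ∈ S, ∀ a' ∈ S, α a a' → AdjEq β (f a) (f a')

/-- The hyperspace adjacency `κ'`: distinct `A, B` are adjacent iff every point of `A`
is adjacent-or-equal to some point of `B` and vice versa. -/
def HyperAdj {X : Type*} (κ : X → X → Prop) (A B : Finset X) : Prop :=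
  A ≠ B ∧ (∀ a ∈ A, ∃ b ∈ B, AdjEq κ a b) ∧ ∀ b ∈ B, ∃ a ∈ A, AdjEq κ b a

/-- A subset `S` is connected w.r.t. adjacency `α`: any two of its points are joined by
a path (finite sequence of consecutively adjacent-or-equal points) lying in `S`. -/
def ConnIn {A : Type*} (α : A → A → Prop) (S : Set A) : Prop :=
  ∀ a ∈ S, ∀ b ∈ S, ∃ (n : ℕ) (p : ℕ → A), p 0 = a ∧ p n = b ∧
    (∀ i ≤ n, p i ∈ S) ∧ ∀ i < n, AdjEq α (p i) (p (i + 1))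

/-- `a` and `b` are joined by a path lying in `S` (i.e. they are in the same
connected component of the graph induced on `S`). -/
def Chain {A : Type*} (α : A → A → Prop) (S : Set A) (a b : A) : Prop :=
  ∃ (n : ℕ) (p : ℕ → A), p 0 = a ∧ p n = b ∧
    (∀ i ≤ n, p i ∈ S) ∧ ∀ i < n, AdjEq α (p i) (p (i + 1))

/-- The carrier of the hyperspace `2^X`: nonempty finite subsets of `X`. -/
def TwoX (X : Type*) : Set (Finset X) := {A | A.Nonempty}

/-- The carrier of `K(X,κ')`: nonempty finite κ-connected subsets of `X`. -/
def KSet {X : Type*} (κ : X → X → Prop) : Set (Finset X) :=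
  {A | A.Nonempty ∧ ConnIn κ (A : Set X)}

/-- A digital homotopy from `f` to `g`, relative to carriers `S`, `T`:
a function `F : S × [0,m] → T` with `F(·,0) = f`, `F(·,m) = g`, all tracks
`t ↦ F(a,t)` are paths, and all time slices `a ↦ F(a,t)` are continuous. -/
def HtpyOn {A B : Type*} (α : A → A → Prop) (β : B → B → Prop)
    (S : Set A) (T : Set B) (f g : A → B) : Prop :=
  ∃ (m : ℕ) (F : A → ℕ → B),
    (∀ a ∈ S, ∀ t ≤ m, F a t ∈ T) ∧
    (∀ a ∈ S, F a 0 = f a) ∧ (∀ a ∈ S, F a m = g a) ∧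
    (∀ a ∈ S, ∀ t < m, AdjEq β (F a t) (F a (t + 1))) ∧
    (∀ t ≤ m, ∀ a ∈ S, ∀ a' ∈ S, α a a' → AdjEq β (F a t) (F a' t))

/-- A digital homotopy from `f` to `g` in exactly `m` steps (on full types). -/
def HtpyN {X Y : Type*} (κ : X → X → Prop) (lam : Y → Y → Prop)
    (f g : X → Y) (m : ℕ) : Prop :=
  ∃ F : X → ℕ → Y,
    (∀ x, F x 0 = f x) ∧ (∀ x, F x m = g x) ∧
    (∀ x, ∀ t < m, AdjEq lam (F x t) (F x (t + 1))) ∧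
    (∀ t ≤ m, DigCont κ lam fun x => F x t)

/-- `f` and `g` are digitally homotopic. -/
def Htpy {X Y : Type*} (κ : X → X → Prop) (lam : Y → Y → Prop) (f g : X → Y) : Prop :=
  ∃ m, HtpyN κ lam f g m

/-- The graphs on carriers `S` and `T` have the same homotopy type. -/
def HtpyEquivOn {A B : Type*} (α : A → A → Prop) (β : B → B → Prop)
    (S : Set A) (T : Set B) : Prop :=
  ∃ (f : A → B) (g : B → A),
    ContOn α β S T f ∧ ContOn β α T S g ∧
    HtpyOn α α S S (g ∘ f) id ∧ HtpyOn β β T T (f ∘ g) id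

/-- The graph on carrier `S` is contractible: the identity is homotopic to a constant. -/
def ContractibleOn {A : Type*} (α : A → A → Prop) (S : Set A) : Prop :=
  ∃ c ∈ S, HtpyOn α α S S id fun _ => c

/-- `Φ`-adjacency of functions: `f ≠ g` and `f(x) ⟷≤ g(x)` for all `x`. -/
def PhiAdj {X Y : Type*} (lam : Y → Y → Prop) (f g : X → Y) : Prop :=
  f ≠ g ∧ ∀ x, AdjEq lam (f x) (g x)

/-- `Ψ`-adjacency of functions: `f ≠ g` and `x₀ ⟷≤ x₁` implies `f(x₀) ⟷≤ g(x₁)`. -/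
def PsiAdj {X Y : Type*} (κ : X → X → Prop) (lam : Y → Y → Prop) (f g : X → Y) : Prop :=
  f ≠ g ∧ ∀ x₀ x₁, AdjEq κ x₀ x₁ → AdjEq lam (f x₀) (g x₁)

/-- `C` is a connected component of the graph induced on the vertex set `V`:
a maximal connected subset of `V`. -/
def IsComponentIn {A : Type*} (α : A → A → Prop) (V C : Set A) : Prop :=
  C ⊆ V ∧ ConnIn α C ∧ ∀ C' : Set A, C' ⊆ V → ConnIn α C' → C ⊆ C' → C' = C


/-!
Taking images turns a continuous map `f : X → Y` into a continuous map `A ↦ f(A)` of hyperspaces,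
and a homotopy `F` into the homotopy `(A, t) ↦ F(A × {t})`: a point of `A` and its adjacent-or-equal
partner are sent by `F(·, t)` to adjacent-or-equal points. Since taking images is functorial, a
homotopy equivalence `(f, g)` of `X` and `Y` induces one of `2^X` and `2^Y`; the same maps work on
`K(X, κ')` because continuous images of connected sets are connected.
-/

section Hyperspace

variable {X Y : Type*} {κ : X → X → Prop} {lam : Y → Y → Prop}

lemma AdjEq.symm {α : X → X → Prop} (hα : ∀ x y, α x y → α y x) {a b : X}
    (h : AdjEq α a b) : AdjEq α b a :=
  h.imp (hα a b) Eq.symm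

lemma DigCont.adjEq {f : X → Y} (hf : DigCont κ lam f) {a b : X} (h : AdjEq κ a b) :
    AdjEq lam (f a) (f b) := by
  rcases h with h | rfl
  · exact hf a b h
  · exact Or.inr rfl

lemma ContOn.digCont_of_univ {f : X → Y} (hf : ContOn κ lam Set.univ Set.univ f) :
    DigCont κ lam f :=
  fun x x' h => hf.2 x trivial x' trivial h

lemma adjEq_hyperAdj_image [DecidableEq Y] {u v : X → Y} {A B : Finset X}
    (hAB : ∀ a ∈ A, ∃ b ∈ B, AdjEq lam (u a) (v b))
    (hBA : ∀ b ∈ B, ∃ a ∈ A, AdjEq lam (v b) (u a)) :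
    AdjEq (HyperAdj lam) (A.image u) (B.image v) := by
  by_cases he : A.image u = B.image v
  · exact Or.inr he
  refine Or.inl ⟨he, ?_, ?_⟩
  · simp only [Finset.mem_image, forall_exists_index, and_imp, forall_apply_eq_imp_iff₂]
    intro a ha
    obtain ⟨b, hb, hab⟩ := hAB a ha
    exact ⟨v b, ⟨b, hb, rfl⟩, hab⟩
  · simp only [Finset.mem_image, forall_exists_index, and_imp, forall_apply_eq_imp_iff₂]
    intro b hb
    obtain ⟨a, ha, hba⟩ := hBA b hb
    exact ⟨u a, ⟨a, ha, rfl⟩, hba⟩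

lemma DigCont.hyperAdj_image [DecidableEq Y] {f : X → Y} (hf : DigCont κ lam f) :
    DigCont (HyperAdj κ) (HyperAdj lam) (Finset.image f) := by
  rintro A B ⟨-, hAB, hBA⟩
  refine adjEq_hyperAdj_image (fun a ha => ?_) (fun b hb => ?_)
  · obtain ⟨b, hb, hab⟩ := hAB a ha
    exact ⟨b, hb, hf.adjEq hab⟩
  · obtain ⟨a, ha, hba⟩ := hBA b hb
    exact ⟨a, ha, hf.adjEq hba⟩

lemma ConnIn.image [DecidableEq Y] {f : X → Y} (hf : DigCont κ lam f) {A : Finset X}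
    (hA : ConnIn κ (A : Set X)) : ConnIn lam (A.image f : Set Y) := by
  simp only [ConnIn, Finset.coe_image, Set.mem_image, Finset.mem_coe, forall_exists_index,
    and_imp, forall_apply_eq_imp_iff₂]
  intro a ha a' ha'
  obtain ⟨n, p, h0, hn, hmem, hadj⟩ := hA a ha a' ha'
  exact ⟨n, f ∘ p, by simp [h0], by simp [hn], fun i hi => ⟨p i, hmem i hi, rfl⟩,
    fun i hi => hf.adjEq (hadj i hi)⟩

lemma mapsTo_image_twoX [DecidableEq Y] (f : X → Y) :
    Set.MapsTo (Finset.image f) (TwoX X) (TwoX Y) :=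
  fun _ hA => Finset.Nonempty.image hA f

lemma DigCont.mapsTo_image_kSet [DecidableEq Y] {f : X → Y} (hf : DigCont κ lam f) :
    Set.MapsTo (Finset.image f) (KSet κ) (KSet lam) :=
  fun _ hA => ⟨hA.1.image f, hA.2.image hf⟩

lemma image_id_eq_id [DecidableEq X] : Finset.image (id : X → X) = id :=
  funext fun _ => Finset.image_id

variable {S : Set (Finset X)} {T : Set (Finset Y)}

lemma DigCont.contOn_image [DecidableEq Y] {f : X → Y} (hf : DigCont κ lam f)
    (hST : Set.MapsTo (Finset.image f) S T) :
    ContOn (HyperAdj κ) (HyperAdj lam) S T (Finset.image f) :=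
  ⟨hST, fun A _ B _ h => hf.hyperAdj_image A B h⟩

lemma HtpyOn.image [DecidableEq Y] (hlam : ∀ x y, lam x y → lam y x) {f g : X → Y}
    (hST : ∀ u : X → Y, DigCont κ lam u → Set.MapsTo (Finset.image u) S T)
    (H : HtpyOn κ lam Set.univ Set.univ f g) :
    HtpyOn (HyperAdj κ) (HyperAdj lam) S T (Finset.image f) (Finset.image g) := by
  obtain ⟨m, F, -, h0, hm, htrack, hslice⟩ := H
  have hcont : ∀ t ≤ m, DigCont κ lam (F · t) :=
    fun t ht x x' h => hslice t ht x trivial x' trivial h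
  refine ⟨m, fun A t => A.image (F · t), fun A hA t ht => hST _ (hcont t ht) hA,
    fun A _ => ?_, fun A _ => ?_, fun A _ t ht => ?_,
    fun t ht A _ B _ h => (hcont t ht).hyperAdj_image A B h⟩
  · simp only [funext fun x => h0 x trivial]
  · simp only [funext fun x => hm x trivial]
  · exact adjEq_hyperAdj_image (fun a ha => ⟨a, ha, htrack a trivial t ht⟩)
      (fun a ha => ⟨a, ha, (htrack a trivial t ht).symm hlam⟩)

lemma HtpyEquivOn.hyperAdj [DecidableEq X] [DecidableEq Y] (hκ : ∀ x y, κ x y → κ y x)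
    (hlam : ∀ x y, lam x y → lam y x)
    (hS : ∀ u : X → X, DigCont κ κ u → Set.MapsTo (Finset.image u) S S)
    (hT : ∀ u : Y → Y, DigCont lam lam u → Set.MapsTo (Finset.image u) T T)
    (hST : ∀ u : X → Y, DigCont κ lam u → Set.MapsTo (Finset.image u) S T)
    (hTS : ∀ u : Y → X, DigCont lam κ u → Set.MapsTo (Finset.image u) T S)
    (h : HtpyEquivOn κ lam Set.univ Set.univ) :
    HtpyEquivOn (HyperAdj κ) (HyperAdj lam) S T := by
  obtain ⟨f, g, hf, hg, hgf, hfg⟩ := h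
  have hf := hf.digCont_of_univ
  have hg := hg.digCont_of_univ
  refine ⟨Finset.image f, Finset.image g, hf.contOn_image (hST f hf),
    hg.contOn_image (hTS g hg), ?_, ?_⟩
  · rw [Finset.image_comp_image, ← image_id_eq_id]
    exact hgf.image hκ hS
  · rw [Finset.image_comp_image, ← image_id_eq_id]
    exact hfg.image hlam hT

end Hyperspace

theorem stmt3_general {X Y : Type*} [DecidableEq X] [DecidableEq Y]
    (κ : X → X → Prop) (lam : Y → Y → Prop)
    (hκsymm : ∀ x y, κ x y → κ y x)
    (hlsymm : ∀ x y, lam x y → lam y x)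
    (h : HtpyEquivOn κ lam (Set.univ : Set X) (Set.univ : Set Y)) :
    HtpyEquivOn (HyperAdj κ) (HyperAdj lam) (TwoX X) (TwoX Y) ∧
    HtpyEquivOn (HyperAdj κ) (HyperAdj lam) (KSet κ) (KSet lam) :=
  ⟨h.hyperAdj hκsymm hlsymm (fun u _ => mapsTo_image_twoX u) (fun u _ => mapsTo_image_twoX u)
      (fun u _ => mapsTo_image_twoX u) (fun u _ => mapsTo_image_twoX u),
    h.hyperAdj hκsymm hlsymm (fun _ hu => hu.mapsTo_image_kSet) (fun _ hu => hu.mapsTo_image_kSet)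
      (fun _ hu => hu.mapsTo_image_kSet) (fun _ hu => hu.mapsTo_image_kSet)⟩

/-- if `(X,κ)` and `(Y,lam)` have the same homotopy type, then so do
`(2^X,κ')` and `(2^Y,lam')`, and so do `K(X,κ')` and `K(Y,lam')`. -/
theorem stmt3 {X Y : Type*} [DecidableEq X] [DecidableEq Y]
    (κ : X → X → Prop) (lam : Y → Y → Prop)
    (hκsymm : ∀ x y, κ x y → κ y x) (hκirr : ∀ x, ¬ κ x x)
    (hlsymm : ∀ x y, lam x y → lam y x) (hlirr : ∀ y, ¬ lam y y)
    (h : HtpyEquivOn κ lam (Set.univ : Set X) (Set.univ : Set Y)) :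
    HtpyEquivOn (HyperAdj κ) (HyperAdj lam) (TwoX X) (TwoX Y) ∧
    HtpyEquivOn (HyperAdj κ) (HyperAdj lam) (KSet κ) (KSet lam) :=
  stmt3_general κ lam hκsymm hlsymm h
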